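/- If Q_{t+1} = Q_t + α_t(R_t - Q_t) with E[R_t | F_t] = μ, |R_t| ≤ R_max a.s., and step sizes satisfying Σ α_t = ∞, Σ α_t² < ∞ with α_t ∈ (0,1], then Q_t → μ almost surely. -/

import Mathlib

open MeasureTheory Filter Finset
open scoped ENNReal NNReal

lemma det_lemma {e x α : ℕ → ℝ} {B : ℝ}
    (hα : ∀ t, α t ∈ Set.Ioc (0 : ℝ) 1)
    (hdiv : Tendsto (fun T => ∑ t ∈ Finset.range T, α t) atTop atTop)
    (hconv : ∃ L, Tendsto (fun T => ∑ t ∈ Finset.range T, α t * x t) atTop (nhds L))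
    (hx : ∀ t, |x t| ≤ B)
    (hrec : ∀ t, e (t + 1) = (1 - α t) * e t + α t * x t) :
    Tendsto e atTop (nhds 0) := by
  have hα0 : ∀ t, 0 < α t := fun t => (hα t).1
  have hα1 : ∀ t, α t ≤ 1 := fun t => (hα t).2
  have hB : 0 ≤ B := le_trans (abs_nonneg _) (hx 0)
  set C : ℝ := max |e 0| B with hCdef
  have hC : ∀ t, |e t| ≤ C := by
    intro t
    induction t with
    | zero => exact le_max_left _ _
    | succ n ih =>
      rw [hrec n]
      calc |(1 - α n) * e n + α n * x n| ≤ |(1 - α n) * e n| + |α n * x n| := abs_add_le _ _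
        _ = (1 - α n) * |e n| + α n * |x n| := by
            rw [abs_mul, abs_mul, abs_of_nonneg (by linarith [hα1 n]),
              abs_of_nonneg (hα0 n).le]
        _ ≤ (1 - α n) * C + α n * C := by
            have h1 := hα0 n; have h2 := hα1 n
            have := le_trans (hx n) (le_max_right |e 0| B)
            nlinarith
        _ = C := by ring
  have hC0 : 0 ≤ C := le_trans (abs_nonneg _) (hC 0)
  -- Cauchy property of partial sums
  obtain ⟨L, hL⟩ := hconv
  have hcauchy : CauchySeq (fun T => ∑ t ∈ Finset.range T, α t * x t) := hL.cauchySeq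
  rw [Metric.tendsto_atTop]
  intro ε hε
  have hε4 : 0 < ε / 4 := by linarith
  obtain ⟨m, hm⟩ := Metric.cauchySeq_iff'.1 hcauchy (ε / 4) hε4
  set S : ℕ → ℝ := fun T => ∑ t ∈ Finset.range T, α t * x t with hSdef
  have hScauchy : ∀ n ≥ m, |S n - S m| < ε / 4 := by
    intro n hn
    have := hm n hn
    rwa [Real.dist_eq] at this
  set P : ℕ → ℝ := fun n => ∏ t ∈ Finset.Ico m n, (1 - α t) with hPdef
  have hP0 : ∀ n, 0 ≤ P n := fun n =>
    Finset.prod_nonneg (fun t _ => by linarith [hα1 t])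
  have hP1 : ∀ n, P n ≤ 1 := fun n =>
    Finset.prod_le_one (fun t _ => by linarith [hα1 t]) (fun t _ => by linarith [hα0 t])
  -- key induction
  have hD : ∀ n, m ≤ n → |e n - P n * e m - (S n - S m)| ≤ ε / 4 := by
    intro n hn
    induction n, hn using Nat.le_induction with
    | base =>
      simp only [hPdef, Finset.Ico_self, Finset.prod_empty, one_mul, sub_self, sub_zero,
        abs_zero]
      positivity
    | succ n hn ih =>
      have hPn : P (n + 1) = P n * (1 - α n) := by
        simp only [hPdef]
        rw [Finset.prod_Ico_succ_top hn]
      have hSn : S (n + 1) = S n + α n * x n := Finset.sum_range_succ _ _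
      have key : e (n + 1) - P (n + 1) * e m - (S (n + 1) - S m)
          = (1 - α n) * (e n - P n * e m - (S n - S m)) - α n * (S n - S m) := by
        rw [hrec n, hPn, hSn]; ring
      rw [key]
      have h1 := hα0 n; have h2 := hα1 n
      have h3 := hScauchy n hn
      calc |(1 - α n) * (e n - P n * e m - (S n - S m)) - α n * (S n - S m)|
          ≤ |(1 - α n) * (e n - P n * e m - (S n - S m))| + |α n * (S n - S m)| :=
            abs_sub _ _
        _ = (1 - α n) * |e n - P n * e m - (S n - S m)| + α n * |S n - S m| := by
            rw [abs_mul, abs_mul, abs_of_nonneg (by linarith), abs_of_nonneg h1.le]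
        _ ≤ ε / 4 := by nlinarith [abs_nonneg (S n - S m)]
  -- P tends to 0
  have hPto0 : Tendsto P atTop (nhds 0) := by
    have hexp : ∀ n, P n ≤ Real.exp (-(∑ t ∈ Finset.Ico m n, α t)) := by
      intro n
      calc P n ≤ ∏ t ∈ Finset.Ico m n, Real.exp (-(α t)) := by
            apply Finset.prod_le_prod (fun t _ => by linarith [hα1 t])
            intro t _
            linarith [Real.add_one_le_exp (-(α t))]
        _ = Real.exp (∑ t ∈ Finset.Ico m n, -(α t)) := (Real.exp_sum _ _).symm
        _ = Real.exp (-(∑ t ∈ Finset.Ico m n, α t)) := by rw [Finset.sum_neg_distrib]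
    have hsumIco : Tendsto (fun n => ∑ t ∈ Finset.Ico m n, α t) atTop atTop := by
      have hev : ∀ᶠ n in atTop, (∑ t ∈ Finset.range n, α t) - (∑ t ∈ Finset.range m, α t)
          = ∑ t ∈ Finset.Ico m n, α t := by
        filter_upwards [eventually_ge_atTop m] with n hn
        rw [Finset.sum_Ico_eq_sub _ hn]
      exact Tendsto.congr' hev (hdiv.atTop_add tendsto_const_nhds)
    have hexpto : Tendsto (fun n => Real.exp (-(∑ t ∈ Finset.Ico m n, α t))) atTop (nhds 0) :=
      Real.tendsto_exp_atBot.comp (tendsto_neg_atBot_iff.2 hsumIco)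
    exact squeeze_zero hP0 hexp hexpto
  have hPC : Tendsto (fun n => P n * C) atTop (nhds 0) := by
    simpa using hPto0.mul_const C
  have hPCev : ∀ᶠ n in atTop, P n * C < ε / 4 := by
    have := (Metric.tendsto_atTop.1 hPC) (ε / 4) hε4
    obtain ⟨N, hN⟩ := this
    filter_upwards [eventually_ge_atTop N] with n hn
    have := hN n hn
    rw [Real.dist_eq, sub_zero] at this
    exact lt_of_le_of_lt (le_abs_self _) this
  rw [← eventually_atTop]
  filter_upwards [hPCev, eventually_ge_atTop m] with n hPCn hn
  have h1 := hD n hn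
  have h2 := hScauchy n hn
  have h3 : |P n * e m| ≤ P n * C := by
    rw [abs_mul, abs_of_nonneg (hP0 n)]
    exact mul_le_mul_of_nonneg_left (hC m) (hP0 n)
  rw [Real.dist_eq, sub_zero]
  calc |e n| = |(e n - P n * e m - (S n - S m)) + P n * e m + (S n - S m)| := by ring_nf
    _ ≤ |e n - P n * e m - (S n - S m)| + |P n * e m| + |S n - S m| := by
        exact le_trans (abs_add_le _ _) (by linarith [abs_add_le (e n - P n * e m - (S n - S m)) (P n * e m)])
    _ < ε / 4 + ε / 4 + ε / 4 := by linarith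
    _ < ε := by linarith

theorem stmt_18 {Ω : Type*} {m0 : MeasurableSpace Ω} (μP : Measure Ω)
    [IsProbabilityMeasure μP] (ℱ : Filtration ℕ m0)
    (Q R : ℕ → Ω → ℝ) (α : ℕ → ℝ) (μ Rmax : ℝ)
    (hα : ∀ t, α t ∈ Set.Ioc (0 : ℝ) 1)
    (hdiv : Tendsto (fun T => ∑ t ∈ Finset.range T, α t) atTop atTop)
    (hsq : Summable (fun t => α t ^ 2))
    (hQmeas : ∀ t, StronglyMeasurable[ℱ t] (Q t))
    (hRmeas : ∀ t, StronglyMeasurable[ℱ (t + 1)] (R t))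
    (hRint : ∀ t, Integrable (R t) μP)
    (hRbound : ∀ t, ∀ᵐ ω ∂μP, |R t ω| ≤ Rmax)
    (hmean : ∀ t, μP[R t|ℱ t] =ᵐ[μP] fun _ => μ)
    (hrec : ∀ t, Q (t + 1) = fun ω => Q t ω + α t * (R t ω - Q t ω)) :
    ∀ᵐ ω ∂μP, Tendsto (fun t => Q t ω) atTop (nhds μ) := by
  have hα0 : ∀ t, 0 < α t := fun t => (hα t).1
  have hα1 : ∀ t, α t ≤ 1 := fun t => (hα t).2
  set B : ℝ := Rmax + |μ| with hBdef
  have hB0 : 0 ≤ B := by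
    obtain ⟨ω₀, h⟩ := (hRbound 0).exists
    have := abs_nonneg (R 0 ω₀); have := abs_nonneg μ
    simp only [hBdef]; linarith
  set X : ℕ → Ω → ℝ := fun t ω => α t * (R t ω - μ) with hXdef
  set M : ℕ → Ω → ℝ := fun n ω => ∑ t ∈ Finset.range n, X t ω with hMdef
  have hXmeas : ∀ t, StronglyMeasurable[ℱ (t + 1)] (X t) := fun t =>
    stronglyMeasurable_const.mul ((hRmeas t).sub stronglyMeasurable_const)
  have hXint : ∀ t, Integrable (X t) μP := fun t =>
    (((hRint t).sub (integrable_const μ)).const_mul (α t))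
  have hXbd : ∀ t, ∀ᵐ ω ∂μP, |X t ω| ≤ α t * B := by
    intro t
    filter_upwards [hRbound t] with ω h
    have : |R t ω - μ| ≤ B := by
      calc |R t ω - μ| ≤ |R t ω| + |μ| := abs_sub _ _
        _ ≤ B := by simp only [hBdef]; linarith
    calc |X t ω| = α t * |R t ω - μ| := by
          rw [hXdef]; simp [abs_mul, abs_of_nonneg (hα0 t).le]
      _ ≤ α t * B := mul_le_mul_of_nonneg_left this (hα0 t).le
  have hXcond : ∀ t, μP[X t|ℱ t] =ᵐ[μP] 0 := by
    intro t
    have h1 : X t = (α t) • (R t - fun _ => μ) := by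
      funext ω; simp [hXdef, smul_eq_mul]
    rw [h1]
    calc μP[(α t) • (R t - fun _ => μ)|ℱ t]
        =ᵐ[μP] (α t) • μP[R t - fun _ => μ|ℱ t] := condExp_smul (α t) _ _
      _ =ᵐ[μP] (α t) • (μP[R t|ℱ t] - μP[(fun _ => μ)|ℱ t]) := by
          filter_upwards [condExp_sub (hRint t) (integrable_const μ) (m := ℱ t)] with ω h
          simp [h]
      _ =ᵐ[μP] 0 := by
          filter_upwards [hmean t] with ω h
          simp [h, condExp_const (ℱ.le t)]
  have Madp : StronglyAdapted ℱ M := by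
    intro n
    show StronglyMeasurable[ℱ n] fun ω => ∑ t ∈ Finset.range n, X t ω
    refine Finset.stronglyMeasurable_fun_sum _ fun t ht => ?_
    exact (hXmeas t).mono (ℱ.mono (by have := Finset.mem_range.1 ht; omega))
  have Mint : ∀ n, Integrable (M n) μP := fun n =>
    integrable_finset_sum _ (fun t _ => hXint t)
  have hMsucc : ∀ n, M (n + 1) = M n + X n := by
    intro n; funext ω; simp [hMdef, Finset.sum_range_succ]
  have Mmart : Martingale M ℱ μP := by
    apply martingale_nat Madp Mint
    intro n
    have : μP[M (n + 1)|ℱ n] =ᵐ[μP] M n := by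
      rw [hMsucc n]
      calc μP[M n + X n|ℱ n] =ᵐ[μP] μP[M n|ℱ n] + μP[X n|ℱ n] :=
            condExp_add (Mint n) (hXint n) _
        _ =ᵐ[μP] M n + 0 := by
            rw [condExp_of_stronglyMeasurable (ℱ.le n) (Madp n) (Mint n)]
            filter_upwards [hXcond n] with ω h
            simp [h]
        _ = M n := by simp
    exact this.symm
  have hMbd : ∀ n, ∀ᵐ ω ∂μP, |M n ω| ≤ n * B := by
    intro n
    filter_upwards [ae_all_iff.2 hXbd] with ω h
    calc |M n ω| ≤ ∑ t ∈ Finset.range n, |X t ω| := Finset.abs_sum_le_sum_abs _ _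
      _ ≤ ∑ t ∈ Finset.range n, B := by
          apply Finset.sum_le_sum
          intro t _
          exact le_trans (h t) (by nlinarith [hα1 t, hα0 t])
      _ = n * B := by simp [mul_comm]
  have hMsm : ∀ n, StronglyMeasurable (M n) := fun n => (Madp n).mono (ℱ.le n)
  have hM2int : ∀ n, Integrable (fun ω => M n ω ^ 2) μP := by
    intro n
    apply Integrable.mono' (integrable_const ((n * B) ^ 2))
      ((hMsm n).measurable.pow_const 2).aestronglyMeasurable
    filter_upwards [hMbd n] with ω h
    rw [Real.norm_eq_abs, abs_pow]
    nlinarith [abs_nonneg (M n ω)]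
  have hX2int : ∀ n, Integrable (fun ω => X n ω ^ 2) μP := by
    intro n
    have hsm := (hXmeas n).mono (ℱ.le (n + 1))
    apply Integrable.mono' (integrable_const ((α n * B) ^ 2))
      (hsm.measurable.pow_const 2).aestronglyMeasurable
    filter_upwards [hXbd n] with ω h
    rw [Real.norm_eq_abs, abs_pow]
    nlinarith [abs_nonneg (X n ω)]
  have hMXint : ∀ n, Integrable (fun ω => M n ω * X n ω) μP := by
    intro n
    apply Integrable.mono' (integrable_const ((n * B) * (α n * B)))
      ((hMsm n).measurable.mul ((hXmeas n).mono (ℱ.le (n + 1))).measurable).aestronglyMeasurable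
    filter_upwards [hMbd n, hXbd n] with ω h1 h2
    rw [Real.norm_eq_abs, Pi.mul_apply, abs_mul]
    exact mul_le_mul h1 h2 (abs_nonneg _) (by positivity)
  have hMX0 : ∀ n, ∫ ω, M n ω * X n ω ∂μP = 0 := by
    intro n
    have hce : μP[(fun ω => M n ω * X n ω)|ℱ n] =ᵐ[μP] fun ω => M n ω * (μP[X n|ℱ n]) ω := by
      have := condExp_mul_of_stronglyMeasurable_left (Madp n) (μ := μP) (g := X n)
        (hMXint n) (hXint n)
      exact this
    have hce0 : μP[(fun ω => M n ω * X n ω)|ℱ n] =ᵐ[μP] 0 := by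
      filter_upwards [hce, hXcond n] with ω h1 h2
      simp only [h1, Pi.zero_apply] at *
      rw [h2]; ring
    calc ∫ ω, M n ω * X n ω ∂μP = ∫ ω, (μP[(fun ω => M n ω * X n ω)|ℱ n]) ω ∂μP :=
          (integral_condExp (ℱ.le n)).symm
      _ = ∫ ω, (0 : ℝ) ∂μP := integral_congr_ae hce0
      _ = 0 := by simp
  have hX2le : ∀ n, ∫ ω, X n ω ^ 2 ∂μP ≤ α n ^ 2 * B ^ 2 := by
    intro n
    calc ∫ ω, X n ω ^ 2 ∂μP ≤ ∫ _, (α n * B) ^ 2 ∂μP := by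
          apply integral_mono_ae (hX2int n) (integrable_const _)
          filter_upwards [hXbd n] with ω h
          nlinarith [abs_nonneg (X n ω), sq_abs (X n ω)]
      _ = (α n * B) ^ 2 := by simp
      _ = α n ^ 2 * B ^ 2 := by ring
  have hM2 : ∀ n, ∫ ω, M n ω ^ 2 ∂μP ≤ B ^ 2 * ∑ t ∈ Finset.range n, α t ^ 2 := by
    intro n
    induction n with
    | zero => simp [hMdef]
    | succ n ih =>
      have hexpand : (fun ω => M (n + 1) ω ^ 2)
          = fun ω => M n ω ^ 2 + (2 * (M n ω * X n ω) + X n ω ^ 2) := by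
        funext ω
        rw [hMsucc n]; simp only [Pi.add_apply]; ring
      have e1 : ∫ ω, (M n ω ^ 2 + (2 * (M n ω * X n ω) + X n ω ^ 2)) ∂μP
          = (∫ ω, M n ω ^ 2 ∂μP) + ∫ ω, (2 * (M n ω * X n ω) + X n ω ^ 2) ∂μP :=
        integral_add (hM2int n) (((hMXint n).const_mul 2).add (hX2int n))
      have e2 : ∫ ω, (2 * (M n ω * X n ω) + X n ω ^ 2) ∂μP
          = (∫ ω, 2 * (M n ω * X n ω) ∂μP) + ∫ ω, X n ω ^ 2 ∂μP :=
        integral_add ((hMXint n).const_mul 2) (hX2int n)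
      have e3 : ∫ ω, 2 * (M n ω * X n ω) ∂μP = 2 * ∫ ω, M n ω * X n ω ∂μP :=
        integral_const_mul 2 _
      rw [hexpand, e1, e2, e3, hMX0 n, Finset.sum_range_succ]
      have := hX2le n
      nlinarith [hX2le n, ih]
  set K : ℝ := ∑' t, α t ^ 2 with hKdef
  have hKle : ∀ n, ∑ t ∈ Finset.range n, α t ^ 2 ≤ K :=
    fun n => Summable.sum_le_tsum _ (fun t _ => sq_nonneg _) hsq
  have hbdd : ∀ n, eLpNorm (M n) 1 μP ≤ ((1 + B ^ 2 * K).toNNReal : ℝ≥0∞) := by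
    intro n
    have h1 : ∫ ω, ‖M n ω‖ ∂μP ≤ 1 + B ^ 2 * K := by
      calc ∫ ω, ‖M n ω‖ ∂μP ≤ ∫ ω, (1 + M n ω ^ 2) ∂μP := by
            apply integral_mono ((Mint n).norm) ((integrable_const 1).add (hM2int n))
            intro ω
            simp only [Real.norm_eq_abs, Pi.add_apply]
            nlinarith [sq_nonneg (|M n ω| - 1), sq_abs (M n ω)]
        _ = 1 + ∫ ω, M n ω ^ 2 ∂μP := by
            rw [integral_add (integrable_const 1) (hM2int n)]; simp
        _ ≤ 1 + B ^ 2 * K := by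
            have h2 : B ^ 2 * ∑ t ∈ Finset.range n, α t ^ 2 ≤ B ^ 2 * K :=
              mul_le_mul_of_nonneg_left (hKle n) (sq_nonneg B)
            linarith [hM2 n]
    rw [eLpNorm_one_eq_lintegral_enorm, ← ofReal_integral_norm_eq_lintegral_enorm (Mint n)]
    exact ENNReal.ofReal_le_ofReal h1
  have hconvae := Mmart.submartingale.exists_ae_tendsto_of_bdd hbdd
  filter_upwards [hconvae, ae_all_iff.2 hRbound] with ω hconv hbd
  have hdet : Tendsto (fun t => Q t ω - μ) atTop (nhds 0) := by
    apply det_lemma hα hdiv (x := fun t => R t ω - μ)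
    · obtain ⟨c, hc⟩ := hconv
      exact ⟨c, hc⟩
    · intro t
      calc |R t ω - μ| ≤ |R t ω| + |μ| := abs_sub _ _
        _ ≤ B := by simp only [hBdef]; linarith [hbd t]
    · intro t
      have := congrFun (hrec t) ω
      rw [this]; ring
  have := hdet.add_const μ
  simpa using this
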